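/- Let a : ℝ≥0 → ℝ be bounded continuous, f : ℝ≥0 × ℝ → ℝ continuous with |f(t,x) − f(t,y)| ≤ m(t)|x − y| for a continuous m : ℝ≥0 → ℝ≥0, and u : ℝ≥0 × ℝ≥0 × ℝ × ℝ → ℝ continuous with |u(t,s,x₂,y₂) − u(t,s,x₁,y₁)| ≤ n(t)Φ(|x₂−x₁|, |y₂−y₁|) for a continuous n and a continuous nondecreasing Φ with Φ(0,0)=0. Set u*(t) = max{|u(t,s,0,0)| : 0 ≤ s ≤ t}. Then for any bounded continuous x : ℝ≥0 → ℝ with ‖x‖ ≤ r and any t ≥ 0, with λ ∈ (0,1) and α ∈ (0,1): |a(t) + (f(t,x(t))/Γ(α)) ∫₀^t u(t,s,x(s),x(λs))(t−s)^{α−1} ds| ≤ ‖a‖ + (1/Γ(α+1))[φ(t)·r·Φ(r,r) + ψ(t)·r + ξ(t)·Φ(r,r) + η(t)], where φ(t) = m(t)n(t)t^α, ψ(t) = m(t)u*(t)t^α, ξ(t) = n(t)|f(t,0)|t^α, η(t) = u*(t)|f(t,0)|t^α. -/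

import Mathlib

/-!
Bound the three factors separately: `|f(t, x t)| ≤ m(t) r + |f(t, 0)|` by the Lipschitz condition,
`|u(t, s, x s, x (λ s))| ≤ n(t) Φ(r, r) + u*(t)` by the modulus of `u`, and the kernel integrates
to `∫₀ᵗ (t - s)^(α-1) ds = t^α / α`; then `α Γ(α) = Γ(α + 1)` and expanding the product give
the bound.
-/

open Real intervalIntegral

lemma abs_le_mul_add_abs_apply_zero {g : ℝ → ℝ} {M r x : ℝ}
    (hg : ∀ x y, |g x - g y| ≤ M * |x - y|) (hx : |x| ≤ r) : |g x| ≤ M * r + |g 0| := by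
  have hM : 0 ≤ M := by simpa using (abs_nonneg _).trans (hg 1 0)
  have hgx : |g x| - |g 0| ≤ M * |x| := by simpa using (abs_sub_abs_le_abs_sub _ _).trans (hg x 0)
  nlinarith

lemma abs_le_mul_modulus_add_abs_apply_zero {v Φ : ℝ → ℝ → ℝ} {N r p q : ℝ}
    (hv : ∀ x₁ y₁ x₂ y₂, |v x₂ y₂ - v x₁ y₁| ≤ N * Φ |x₂ - x₁| |y₂ - y₁|) (hN : 0 ≤ N)
    (hΦ : ∀ p q p' q' : ℝ, 0 ≤ p → 0 ≤ q → p ≤ p' → q ≤ q' → Φ p q ≤ Φ p' q')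
    (hp : |p| ≤ r) (hq : |q| ≤ r) : |v p q| ≤ N * Φ r r + |v 0 0| := by
  have hvp : |v p q| - |v 0 0| ≤ N * Φ |p| |q| := by
    simpa using (abs_sub_abs_le_abs_sub _ _).trans (hv 0 0 p q)
  have hΦpq : N * Φ |p| |q| ≤ N * Φ r r :=
    mul_le_mul_of_nonneg_left (hΦ _ _ _ _ (abs_nonneg p) (abs_nonneg q) hp hq) hN
  linarith

lemma integral_sub_rpow_sub_one {α t : ℝ} (hα : 0 < α) :
    ∫ s in (0:ℝ)..t, (t - s) ^ (α - 1) = t ^ α / α := by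
  rw [integral_comp_sub_left (fun s => s ^ (α - 1)) t, integral_rpow (Or.inl (by linarith))]
  simp [Real.zero_rpow hα.ne']

lemma intervalIntegrable_sub_rpow_sub_one {α t : ℝ} (hα : 0 < α) :
    IntervalIntegrable (fun s => (t - s) ^ (α - 1)) MeasureTheory.volume 0 t := by
  have h : IntervalIntegrable (fun s => s ^ (α - 1)) MeasureTheory.volume 0 t :=
    intervalIntegrable_rpow' (by linarith)
  simpa using (h.comp_sub_left t).symm

lemma abs_integral_mul_sub_rpow_le {g : ℝ → ℝ} {C α t : ℝ} (hα : 0 < α) (ht : 0 ≤ t)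
    (hg : ∀ s ∈ Set.Ioc 0 t, |g s| ≤ C) :
    |∫ s in (0:ℝ)..t, g s * (t - s) ^ (α - 1)| ≤ C * (t ^ α / α) := by
  rw [← integral_sub_rpow_sub_one hα, ← intervalIntegral.integral_const_mul]
  refine norm_integral_le_of_norm_le (f := fun s => g s * (t - s) ^ (α - 1)) ht
    (Filter.Eventually.of_forall fun s hs => ?_)
    ((intervalIntegrable_sub_rpow_sub_one hα).const_mul C)
  have hK : 0 ≤ (t - s) ^ (α - 1) := Real.rpow_nonneg (by linarith [hs.2]) _
  rw [Real.norm_eq_abs, abs_mul, abs_of_nonneg hK]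
  exact mul_le_mul_of_nonneg_right (hg s hs) hK

theorem stmt8_general (α l : ℝ) (hα : 0 < α) (hl : 0 < l)
    (a m n : ℝ → ℝ) (f : ℝ → ℝ → ℝ) (u : ℝ → ℝ → ℝ → ℝ → ℝ) (Φ : ℝ → ℝ → ℝ)
    (ustar : ℝ → ℝ) (A r : ℝ)
    -- a bounded continuous, with sup norm A
    (hA : IsLUB ((fun t => |a t|) '' Set.Ici 0) A)
    -- f continuous and Lipschitz in the second variable with coefficient m
    (hLip : ∀ t ∈ Set.Ici (0:ℝ), ∀ x y : ℝ, |f t x - f t y| ≤ m t * |x - y|)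
    -- u continuous with modulus n(t) Φ
    (hn0 : ∀ t ∈ Set.Ici (0:ℝ), 0 ≤ n t)
    (hΦmono : ∀ p q p' q' : ℝ, 0 ≤ p → 0 ≤ q → p ≤ p' → q ≤ q' → Φ p q ≤ Φ p' q')
    (humod : ∀ t s : ℝ, 0 ≤ s → s ≤ t → ∀ x₁ y₁ x₂ y₂ : ℝ,
      |u t s x₂ y₂ - u t s x₁ y₁| ≤ n t * Φ |x₂ - x₁| |y₂ - y₁|)
    -- u*(t) = max of |u(t,s,0,0)| over s ∈ [0,t]
    (hustar : ∀ t ∈ Set.Ici (0:ℝ),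
      IsGreatest ((fun s => |u t s 0 0|) '' Set.Icc 0 t) (ustar t))
    -- x in the ball of radius r of BC(ℝ≥0)
    (x : ℝ → ℝ)
    (hxr : ∀ t ∈ Set.Ici (0:ℝ), |x t| ≤ r) :
    ∀ t ∈ Set.Ici (0:ℝ),
      |a t + (f t (x t) / Real.Gamma α) *
          ∫ s in (0:ℝ)..t, u t s (x s) (x (l * s)) * (t - s) ^ (α - 1)| ≤
        A + (1 / Real.Gamma (α + 1)) *
          ((m t * n t * t ^ α) * r * Φ r r + (m t * ustar t * t ^ α) * r +
            (n t * |f t 0| * t ^ α) * Φ r r + ustar t * |f t 0| * t ^ α) := by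
  intro t ht
  have hΓ : 0 < Real.Gamma α := Real.Gamma_pos_of_pos hα
  have hf : |f t (x t)| ≤ m t * r + |f t 0| :=
    abs_le_mul_add_abs_apply_zero (hLip t ht) (hxr t ht)
  have hu : ∀ s ∈ Set.Ioc 0 t, |u t s (x s) (x (l * s))| ≤ n t * Φ r r + ustar t := by
    intro s ⟨hs0, hst⟩
    refine (abs_le_mul_modulus_add_abs_apply_zero (humod t s hs0.le hst) (hn0 t ht) hΦmono
      (hxr s hs0.le) (hxr _ (mul_nonneg hl.le hs0.le))).trans ?_
    gcongr
    exact (hustar t ht).2 ⟨s, ⟨hs0.le, hst⟩, rfl⟩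
  have hI := abs_integral_mul_sub_rpow_le hα ht hu
  calc _ ≤ |a t| + |f t (x t)| / Real.Gamma α *
          |∫ s in (0:ℝ)..t, u t s (x s) (x (l * s)) * (t - s) ^ (α - 1)| :=
        (abs_add_le _ _).trans_eq (by rw [abs_mul, abs_div, abs_of_pos hΓ])
    _ ≤ A + (m t * r + |f t 0|) / Real.Gamma α * ((n t * Φ r r + ustar t) * (t ^ α / α)) := by
        have : 0 ≤ m t * r + |f t 0| := (abs_nonneg _).trans hf
        gcongr
        exact hA.1 ⟨t, ht, rfl⟩
    _ = _ := by
        rw [Real.Gamma_add_one hα.ne']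
        field_simp
        ring

theorem stmt8 (α l : ℝ) (hα : 0 < α) (hα1 : α < 1) (hl : 0 < l) (hl1 : l < 1)
    (a m n : ℝ → ℝ) (f : ℝ → ℝ → ℝ) (u : ℝ → ℝ → ℝ → ℝ → ℝ) (Φ : ℝ → ℝ → ℝ)
    (ustar : ℝ → ℝ) (A r : ℝ)
    -- a bounded continuous, with sup norm A
    (ha : ContinuousOn a (Set.Ici 0))
    (hA : IsLUB ((fun t => |a t|) '' Set.Ici 0) A)
    -- f continuous and Lipschitz in the second variable with coefficient m
    (hf : ContinuousOn (fun p : ℝ × ℝ => f p.1 p.2) (Set.Ici 0 ×ˢ Set.univ))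
    (hmc : ContinuousOn m (Set.Ici 0)) (hm0 : ∀ t ∈ Set.Ici (0:ℝ), 0 ≤ m t)
    (hLip : ∀ t ∈ Set.Ici (0:ℝ), ∀ x y : ℝ, |f t x - f t y| ≤ m t * |x - y|)
    -- u continuous with modulus n(t) Φ
    (hu : ContinuousOn (fun p : ℝ × ℝ × ℝ × ℝ => u p.1 p.2.1 p.2.2.1 p.2.2.2)
      (Set.Ici 0 ×ˢ Set.Ici 0 ×ˢ Set.univ ×ˢ Set.univ))
    (hnc : ContinuousOn n (Set.Ici 0)) (hn0 : ∀ t ∈ Set.Ici (0:ℝ), 0 ≤ n t)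
    (hΦc : ContinuousOn (fun p : ℝ × ℝ => Φ p.1 p.2) (Set.Ici 0 ×ˢ Set.Ici 0))
    (hΦmono : ∀ p q p' q' : ℝ, 0 ≤ p → 0 ≤ q → p ≤ p' → q ≤ q' → Φ p q ≤ Φ p' q')
    (hΦ0 : Φ 0 0 = 0)
    (hΦnn : ∀ p q : ℝ, 0 ≤ p → 0 ≤ q → 0 ≤ Φ p q)
    (humod : ∀ t s : ℝ, 0 ≤ s → s ≤ t → ∀ x₁ y₁ x₂ y₂ : ℝ,
      |u t s x₂ y₂ - u t s x₁ y₁| ≤ n t * Φ |x₂ - x₁| |y₂ - y₁|)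
    -- u*(t) = max of |u(t,s,0,0)| over s ∈ [0,t]
    (hustar : ∀ t ∈ Set.Ici (0:ℝ),
      IsGreatest ((fun s => |u t s 0 0|) '' Set.Icc 0 t) (ustar t))
    -- x in the ball of radius r of BC(ℝ≥0)
    (x : ℝ → ℝ) (hx : ContinuousOn x (Set.Ici 0)) (hr : 0 ≤ r)
    (hxr : ∀ t ∈ Set.Ici (0:ℝ), |x t| ≤ r) :
    ∀ t ∈ Set.Ici (0:ℝ),
      |a t + (f t (x t) / Real.Gamma α) *
          ∫ s in (0:ℝ)..t, u t s (x s) (x (l * s)) * (t - s) ^ (α - 1)| ≤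
        A + (1 / Real.Gamma (α + 1)) *
          ((m t * n t * t ^ α) * r * Φ r r + (m t * ustar t * t ^ α) * r +
            (n t * |f t 0| * t ^ α) * Φ r r + ustar t * |f t 0| * t ^ α) :=
  stmt8_general α l hα hl a m n f u Φ ustar A r hA hLip hn0 hΦmono humod hustar x hxr
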